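/- arXiv:1304.2649 — 6 statements merged into one kernel-verified Lean document; each statement's English description precedes it below -/
import Mathlib

section
/- Let R be a φ-simple φ-ring, let Q be the localization of R at its multiplicative set of non-zero-divisors (the total quotient ring), and let Φ : Q → Q be a ring endomorphism satisfying Φ ∘ algebraMap R Q = algebraMap R Q ∘ φ. Then every Φ-constant of Q comes from a φ-constant of R: for every x ∈ Q with Φ(x) = x there exists r ∈ R with φ(r) = r and algebraMap R Q r = x; that is, Q^Φ equals the image of R^φ under the localization map. -/
/-!
For `x ∈ Q`, the ideal of denominators `{r ∈ R | r x ∈ R}` is nonzero because `x` is a fraction,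
and it is a `φ`-ideal when `Φ x = x`. By `φ`-simplicity it contains `1`, so `x` lies in `R`;
injectivity of `R → Q` then makes it a `φ`-constant of `R`.
-/

/-- A `φ`-ring `R` is `φ`-simple if the zero ideal and the whole ring are its only
`φ`-ideals (ideals `I` with `φ(I) ⊆ I`). -/
def DiffSimple {R : Type*} [CommRing R] (φ : R →+* R) : Prop :=
  (⊥ : Ideal R) ≠ ⊤ ∧ ∀ I : Ideal R, (∀ x ∈ I, φ x ∈ I) → I = ⊥ ∨ I = ⊤

namespace DiffSimple

variable {R : Type*} [CommRing R] {φ : R →+* R}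

theorem nontrivial (h : DiffSimple φ) : Nontrivial R :=
  (Submodule.nontrivial_iff R).mp (nontrivial_of_ne _ _ h.1)

theorem eq_top_of_ne_bot (h : DiffSimple φ) {I : Ideal R} (hI : ∀ x ∈ I, φ x ∈ I)
    (hne : I ≠ ⊥) : I = ⊤ :=
  (h.2 I hI).resolve_left hne

end DiffSimple

section DenominatorIdeal

variable {R S : Type*} [CommRing R] [CommRing S] [Algebra R S]

variable (R) in
def denominatorIdeal (x : S) : Ideal R :=
  (1 : Submodule R S).colon {x}

theorem mem_denominatorIdeal {x : S} {r : R} :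
    r ∈ denominatorIdeal R x ↔ ∃ s, algebraMap R S s = r • x := by
  rw [denominatorIdeal, Submodule.mem_colon_singleton, Submodule.mem_one]

theorem one_mem_denominatorIdeal_iff {x : S} :
    (1 : R) ∈ denominatorIdeal R x ↔ x ∈ Set.range (algebraMap R S) := by
  rw [mem_denominatorIdeal, one_smul, Set.mem_range]

theorem denominatorIdeal_ne_bot (M : Submonoid R) [IsLocalization M S] (hM : (0 : R) ∉ M)
    (x : S) : denominatorIdeal R x ≠ ⊥ := by
  obtain ⟨⟨a, d⟩, hd⟩ := IsLocalization.surj M x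
  have hd_mem : (d : R) ∈ denominatorIdeal R x :=
    mem_denominatorIdeal.mpr ⟨a, by rw [← hd, Algebra.smul_def, mul_comm]⟩
  intro hbot
  rw [hbot, Ideal.mem_bot] at hd_mem
  exact hM (hd_mem ▸ d.2)

theorem map_mem_denominatorIdeal {φ : R →+* R} {Φ : S →+* S}
    (hcomp : Φ.comp (algebraMap R S) = (algebraMap R S).comp φ) {x : S} (hx : Φ x = x)
    {r : R} (hr : r ∈ denominatorIdeal R x) : φ r ∈ denominatorIdeal R x := by
  obtain ⟨s, hs⟩ := mem_denominatorIdeal.mp hr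
  refine mem_denominatorIdeal.mpr ⟨φ s, ?_⟩
  have := congrArg Φ hs
  rwa [Algebra.smul_def, map_mul, ← RingHom.comp_apply, ← RingHom.comp_apply, hcomp, hx,
    RingHom.comp_apply, RingHom.comp_apply, ← Algebra.smul_def] at this

end DenominatorIdeal

/-- If `R` is a `φ`-simple `φ`-ring, `Q` its total quotient ring (localization at the
non-zero-divisors) and `Φ : Q → Q` extends `φ`, then the `Φ`-constants of `Q` are exactly
the image of the `φ`-constants of `R`. -/
theorem constants_of_total_quotient_ring_of_diffSimple
    {R Q : Type*} [CommRing R] [CommRing Q] [Algebra R Q]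
    [IsLocalization (nonZeroDivisors R) Q]
    (φ : R →+* R) (hsimple : DiffSimple φ)
    (Φ : Q →+* Q) (hcomp : Φ.comp (algebraMap R Q) = (algebraMap R Q).comp φ) :
    {x : Q | Φ x = x} = (algebraMap R Q) '' {r : R | φ r = r} := by
  have hc (r : R) : Φ (algebraMap R Q r) = algebraMap R Q (φ r) := RingHom.congr_fun hcomp r
  have := hsimple.nontrivial
  ext x
  constructor
  · intro hx
    have htop : denominatorIdeal R x = ⊤ :=
      hsimple.eq_top_of_ne_bot (fun _ => map_mem_denominatorIdeal hcomp hx)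
        (denominatorIdeal_ne_bot _ zero_notMem_nonZeroDivisors x)
    obtain ⟨s, rfl⟩ := one_mem_denominatorIdeal_iff.mp (htop ▸ Submodule.mem_top)
    exact ⟨s, IsLocalization.injective Q le_rfl (by rw [← hc, hx]), rfl⟩
  · rintro ⟨r, hr, rfl⟩
    exact (hc r).trans (congrArg _ hr)
end

section
/- Let R be a φ-simple φ-ring, let k be a field, and suppose R is a k-algebra such that φ(algebraMap k R c) = algebraMap k R c for all c ∈ k and the range of algebraMap k R is exactly the subring R^φ of φ-constants. Let D be a commutative k-algebra and equip T := R ⊗_k D with the ring endomorphism Φ := φ ⊗ id. Then the assignments b ↦ Ideal.map (includeRight : D → R ⊗_k D) b and a ↦ Ideal.comap includeRight a are mutually inverse bijections between the set of ideals of D and the set of Φ-stable ideals of T; in particular, for every ideal b of D, Ideal.map includeRight b is Φ-stable and Ideal.comap includeRight (Ideal.map includeRight b) = b, and for every ideal a of T with Φ(a) ⊆ a, Ideal.map includeRight (Ideal.comap includeRight a) = a. -/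
open scoped TensorProduct

/-!
Let `a` be a `Φ`-stable ideal and `b` its contraction to `D`. Suppose `∑ rᵢ ⊗ dᵢ ∈ a` with the
`dᵢ` linearly independent modulo `b` and `rⱼ ≠ 0`. The `j`-th coefficients of the elements
`∑ tᵢ ⊗ dᵢ` of `a` form a nonzero `φ`-ideal of `R`, hence contain `1`; for such a `y` with
`tⱼ = 1`, `Φ y - y` has no `j`-th term, so by induction on the length its coefficients vanish.
Thus every `tᵢ` is a `φ`-constant, i.e. lies in `k`, and `y = 1 ⊗ ∑ tᵢ dᵢ` puts a nontrivial
`k`-combination of the `dᵢ` into `b`: a contradiction. If instead the `dᵢ` are dependent modulo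
`b`, one of them can be traded for an element of `b`, which shortens the sum. Finally
`b = D ∩ (R ⊗ b)` because `R` is faithfully flat over the field `k`.
-/

open Algebra.TensorProduct

theorem DiffSimple.nontrivial_s1 {R : Type*} [CommRing R] {φ : R →+* R} (h : DiffSimple φ) :
    Nontrivial R :=
  nontrivial_of_ne 0 1 fun h01 => h.1 ((Ideal.eq_top_iff_one _).2 (h01 ▸ zero_mem _))

theorem DiffSimple.eq_top_of_mem_of_ne_zero {R : Type*} [CommRing R] {φ : R →+* R}
    (h : DiffSimple φ) {I : Ideal R} (hI : ∀ x ∈ I, φ x ∈ I) {r : R} (hr : r ∈ I)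
    (hr0 : r ≠ 0) : I = ⊤ :=
  (h.2 I hI).resolve_left fun hbot => hr0 (by simpa [hbot] using hr)

theorem linearIndependent_quotient_mk_iff {k D ι : Type*} [CommRing k] [CommRing D]
    [Algebra k D] [Fintype ι] {b : Ideal D} {d : ι → D} :
    LinearIndependent k (fun i => Ideal.Quotient.mkₐ k b (d i)) ↔
      ∀ c : ι → k, ∑ i, c i • d i ∈ b → ∀ i, c i = 0 := by
  rw [Fintype.linearIndependent_iff]
  refine forall_congr' fun c => ?_
  rw [← Ideal.Quotient.eq_zero_iff_mem, ← Ideal.Quotient.mkₐ_eq_mk k, map_sum]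
  simp only [map_smul]

section Module

variable {k M N : Type*} [CommSemiring k] [AddCommMonoid M] [Module k M] [AddCommMonoid N]
  [Module k N]

theorem exists_fin_sum_tmul (x : M ⊗[k] N) :
    ∃ (n : ℕ) (m : Fin n → M) (y : Fin n → N), x = ∑ i, m i ⊗ₜ[k] y i := by
  obtain ⟨S, rfl⟩ := TensorProduct.exists_finset x
  refine ⟨S.card, fun i => (S.equivFin.symm i).1.1, fun i => (S.equivFin.symm i).1.2, ?_⟩
  rw [← Finset.sum_coe_sort]
  exact (Equiv.sum_comp S.equivFin.symm fun p => p.1.1 ⊗ₜ[k] p.1.2).symm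

theorem sum_tmul_eq_sum_succAbove {n : ℕ} (m : Fin (n + 1) → M) (y : Fin (n + 1) → N)
    {j : Fin (n + 1)} (hj : m j = 0) :
    ∑ i, m i ⊗ₜ[k] y i = ∑ i : Fin n, m (j.succAbove i) ⊗ₜ[k] y (j.succAbove i) := by
  rw [Fin.sum_univ_succAbove _ j, hj, TensorProduct.zero_tmul, zero_add]

end Module

section Semiring

variable {k R D : Type*} [CommSemiring k] [CommSemiring R] [Algebra k R] [CommSemiring D]
  [Algebra k D]

theorem sum_algebraMap_tmul {ι : Type*} (s : Finset ι) (c : ι → k) (d : ι → D) :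
    ∑ i ∈ s, algebraMap k R (c i) ⊗ₜ[k] d i = (1 : R) ⊗ₜ[k] ∑ i ∈ s, c i • d i := by
  simp only [TensorProduct.tmul_sum, Algebra.algebraMap_eq_smul_one, TensorProduct.smul_tmul]

theorem tmul_mem_map_includeRight {b : Ideal D} {e : D} (he : e ∈ b) (r : R) :
    r ⊗ₜ[k] e ∈ b.map (includeRight : D →ₐ[k] R ⊗[k] D) := by
  rw [← mul_one r, ← one_mul e, ← tmul_mul_tmul]
  exact Ideal.mul_mem_left _ _ (Ideal.mem_map_of_mem _ he)

variable {φ : R →+* R} {Φ : R ⊗[k] D →+* R ⊗[k] D}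

theorem map_sum_tmul (hΦ : ∀ (r : R) (d : D), Φ (r ⊗ₜ[k] d) = φ r ⊗ₜ[k] d) {ι : Type*}
    (s : Finset ι) (r : ι → R) (d : ι → D) :
    Φ (∑ i ∈ s, r i ⊗ₜ[k] d i) = ∑ i ∈ s, φ (r i) ⊗ₜ[k] d i := by
  simp only [map_sum, hΦ]

theorem apply_mem_map_includeRight (hΦ : ∀ (r : R) (d : D), Φ (r ⊗ₜ[k] d) = φ r ⊗ₜ[k] d)
    (b : Ideal D) :
    ∀ x ∈ b.map (includeRight : D →ₐ[k] R ⊗[k] D),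
      Φ x ∈ b.map (includeRight : D →ₐ[k] R ⊗[k] D) := by
  have hle : b.map (includeRight : D →ₐ[k] R ⊗[k] D) ≤
      (b.map (includeRight : D →ₐ[k] R ⊗[k] D)).comap Φ := by
    refine Ideal.map_le_iff_le_comap.2 fun e he => ?_
    rw [Ideal.mem_comap, Ideal.mem_comap, includeRight_apply, hΦ, map_one]
    exact Ideal.mem_map_of_mem _ he
  exact fun x hx => hle hx

/-- The ideal of `j`-th coefficients `tⱼ` of the elements `∑ tᵢ ⊗ dᵢ` of `a`. -/
def coeffIdeal {ι : Type*} [Fintype ι] (a : Ideal (R ⊗[k] D)) (d : ι → D) (j : ι) : Ideal R :=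
  ((a.restrictScalars R).comap (Fintype.linearCombination R fun i => (1 : R) ⊗ₜ[k] d i)).map
    (LinearMap.proj j)

theorem mem_coeffIdeal {ι : Type*} [Fintype ι] {a : Ideal (R ⊗[k] D)} {d : ι → D} {j : ι}
    {s : R} : s ∈ coeffIdeal a d j ↔ ∃ t : ι → R, ∑ i, t i ⊗ₜ[k] d i ∈ a ∧ t j = s := by
  simp [coeffIdeal, Fintype.linearCombination_apply, TensorProduct.smul_tmul']

theorem apply_mem_coeffIdeal (hΦ : ∀ (r : R) (d : D), Φ (r ⊗ₜ[k] d) = φ r ⊗ₜ[k] d)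
    {a : Ideal (R ⊗[k] D)} (ha : ∀ x ∈ a, Φ x ∈ a) {ι : Type*} [Fintype ι] (d : ι → D)
    (j : ι) : ∀ s ∈ coeffIdeal a d j, φ s ∈ coeffIdeal a d j := by
  simp only [mem_coeffIdeal]
  rintro _ ⟨t, ht, rfl⟩
  exact ⟨fun i => φ (t i), map_sum_tmul hΦ _ t d ▸ ha _ ht, rfl⟩

end Semiring

section Field

variable {k R D : Type*} [Field k] [CommRing R] [Algebra k R] [CommRing D] [Algebra k D]

theorem comap_includeRight_map_includeRight [Nontrivial R] (b : Ideal D) :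
    (b.map (includeRight : D →ₐ[k] R ⊗[k] D)).comap (includeRight : D →ₐ[k] R ⊗[k] D) = b := by
  let e : D ⊗[k] R ≃+* R ⊗[k] D := (Algebra.TensorProduct.comm k D R).toRingEquiv
  have he : ((includeRight : D →ₐ[k] R ⊗[k] D) : D →+* R ⊗[k] D) =
      (e : D ⊗[k] R →+* R ⊗[k] D).comp (algebraMap D (D ⊗[k] R)) := rfl
  change (b.map ((includeRight : D →ₐ[k] R ⊗[k] D) : D →+* R ⊗[k] D)).comap
    ((includeRight : D →ₐ[k] R ⊗[k] D) : D →+* R ⊗[k] D) = b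
  rw [he, ← Ideal.map_map, ← Ideal.comap_comap,
    Ideal.comap_map_of_bijective (f := (e : D ⊗[k] R →+* R ⊗[k] D)) e.bijective]
  exact Ideal.comap_map_eq_self_of_faithfullyFlat b

variable {φ : R →+* R} {Φ : R ⊗[k] D →+* R ⊗[k] D} {a : Ideal (R ⊗[k] D)}

theorem eq_zero_of_sum_tmul_mem (hsimple : DiffSimple φ)
    (hrange : ∀ r : R, φ r = r ↔ ∃ c : k, algebraMap k R c = r)
    (hΦ : ∀ (r : R) (d : D), Φ (r ⊗ₜ[k] d) = φ r ⊗ₜ[k] d) (ha : ∀ x ∈ a, Φ x ∈ a) {n : ℕ}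
    (d : Fin n → D)
    (hd : LinearIndependent k fun i =>
      Ideal.Quotient.mkₐ k (a.comap (includeRight : D →ₐ[k] R ⊗[k] D)) (d i))
    (r : Fin n → R) (hr : ∑ i, r i ⊗ₜ[k] d i ∈ a) : r = 0 := by
  induction n with
  | zero => exact funext fun i => i.elim0
  | succ m ih =>
    by_contra! hr0
    obtain ⟨j, hrj⟩ := Function.ne_iff.1 hr0
    have hJ : coeffIdeal a d j = ⊤ := hsimple.eq_top_of_mem_of_ne_zero
      (apply_mem_coeffIdeal hΦ ha d j) (mem_coeffIdeal.2 ⟨r, hr, rfl⟩) hrj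
    obtain ⟨s, hs, hsj⟩ :=
      mem_coeffIdeal.1 (hJ ▸ Submodule.mem_top : (1 : R) ∈ coeffIdeal a d j)
    have hdiff : ∑ i, (φ (s i) - s i) ⊗ₜ[k] d i ∈ a := by
      simpa only [TensorProduct.sub_tmul, Finset.sum_sub_distrib, map_sum_tmul hΦ]
        using a.sub_mem (ha _ hs) hs
    rw [sum_tmul_eq_sum_succAbove _ _ (j := j) (by rw [hsj, map_one, sub_self])] at hdiff
    have hfixed : ∀ i, φ (s i) = s i := by
      have hdiff0 := ih (d ∘ j.succAbove) (hd.comp _ j.succAbove_right_injective) _ hdiff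
      intro i
      rcases eq_or_ne i j with rfl | hij
      · rw [hsj, map_one]
      · obtain ⟨i', rfl⟩ := Fin.exists_succAbove_eq hij
        exact sub_eq_zero.1 (congrFun hdiff0 i')
    choose c hc using fun i => (hrange (s i)).1 (hfixed i)
    have hcb : ∑ i, c i • d i ∈ a.comap (includeRight : D →ₐ[k] R ⊗[k] D) := by
      rw [Ideal.mem_comap, includeRight_apply, ← sum_algebraMap_tmul]
      simpa only [hc] using hs
    have hcj := hc j
    rw [linearIndependent_quotient_mk_iff.1 hd c hcb j, map_zero, hsj] at hcj
    have := hsimple.nontrivial_s1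
    exact zero_ne_one hcj

theorem sum_tmul_mem_map_comap_includeRight (hsimple : DiffSimple φ)
    (hrange : ∀ r : R, φ r = r ↔ ∃ c : k, algebraMap k R c = r)
    (hΦ : ∀ (r : R) (d : D), Φ (r ⊗ₜ[k] d) = φ r ⊗ₜ[k] d) (ha : ∀ x ∈ a, Φ x ∈ a) {n : ℕ}
    (d : Fin n → D) (r : Fin n → R) (hr : ∑ i, r i ⊗ₜ[k] d i ∈ a) :
    ∑ i, r i ⊗ₜ[k] d i ∈
      (a.comap (includeRight : D →ₐ[k] R ⊗[k] D)).map (includeRight : D →ₐ[k] R ⊗[k] D) := by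
  induction n with
  | zero => simp
  | succ m ih =>
    by_cases hd : LinearIndependent k fun i =>
        Ideal.Quotient.mkₐ k (a.comap (includeRight : D →ₐ[k] R ⊗[k] D)) (d i)
    · simp [eq_zero_of_sum_tmul_mem hsimple hrange hΦ ha d hd r hr]
    simp only [linearIndependent_quotient_mk_iff, not_forall] at hd
    obtain ⟨c, hcb, j, hcj⟩ := hd
    have hpure := tmul_mem_map_includeRight (k := k) (R := R) hcb ((c j)⁻¹ • r j)
    set t : Fin (m + 1) → R := fun i => r i - (c i / c j) • r j
    have hsplit : ∑ i, r i ⊗ₜ[k] d i =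
        ((c j)⁻¹ • r j) ⊗ₜ[k] (∑ i, c i • d i) + ∑ i, t i ⊗ₜ[k] d i := by
      simp only [t, TensorProduct.sub_tmul, Finset.sum_sub_distrib, TensorProduct.tmul_sum,
        TensorProduct.tmul_smul, TensorProduct.smul_tmul', smul_smul, div_eq_mul_inv]
      abel
    have ht : t j = 0 := by simp [t, hcj]
    rw [hsplit, sum_tmul_eq_sum_succAbove t d ht] at hr ⊢
    exact add_mem hpure (ih _ _ ((a.add_mem_iff_right (Ideal.map_comap_le hpure)).1 hr))

end Field

theorem ideal_correspondence_of_diffSimple_tensor_general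
    {k R D : Type*} [Field k] [CommRing R] [Algebra k R] [CommRing D] [Algebra k D]
    (φ : R →+* R) (hsimple : DiffSimple φ)
    (hrange : ∀ r : R, φ r = r ↔ ∃ c : k, algebraMap k R c = r)
    (Φ : (R ⊗[k] D) →+* (R ⊗[k] D))
    (hΦ : ∀ (r : R) (d : D), Φ (r ⊗ₜ[k] d) = φ r ⊗ₜ[k] d) :
    (∀ b : Ideal D,
      (∀ x ∈ Ideal.map (Algebra.TensorProduct.includeRight : D →ₐ[k] R ⊗[k] D) b,
        Φ x ∈ Ideal.map (Algebra.TensorProduct.includeRight : D →ₐ[k] R ⊗[k] D) b) ∧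
      Ideal.comap (Algebra.TensorProduct.includeRight : D →ₐ[k] R ⊗[k] D)
        (Ideal.map (Algebra.TensorProduct.includeRight : D →ₐ[k] R ⊗[k] D) b) = b) ∧
    (∀ a : Ideal (R ⊗[k] D), (∀ x ∈ a, Φ x ∈ a) →
      Ideal.map (Algebra.TensorProduct.includeRight : D →ₐ[k] R ⊗[k] D)
        (Ideal.comap (Algebra.TensorProduct.includeRight : D →ₐ[k] R ⊗[k] D) a) = a) := by
  have := hsimple.nontrivial_s1
  refine ⟨fun b => ⟨apply_mem_map_includeRight hΦ b, comap_includeRight_map_includeRight b⟩,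
    fun a ha => le_antisymm Ideal.map_comap_le fun x hx => ?_⟩
  obtain ⟨n, r, d, rfl⟩ := exists_fin_sum_tmul x
  exact sum_tmul_mem_map_comap_includeRight hsimple hrange hΦ ha d r hx

/-- Let `R` be a `φ`-simple `φ`-ring whose `φ`-constants are exactly the image of a field `k`,
let `D` be a commutative `k`-algebra, and let `Φ = φ ⊗ id` on `T = R ⊗[k] D`.  Then
`b ↦ Ideal.map includeRight b` and `a ↦ Ideal.comap includeRight a` are mutually inverse
bijections between the ideals of `D` and the `Φ`-stable ideals of `T`. -/
theorem ideal_correspondence_of_diffSimple_tensor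
    {k R D : Type*} [Field k] [CommRing R] [Algebra k R] [CommRing D] [Algebra k D]
    (φ : R →+* R) (hsimple : DiffSimple φ)
    (hfix : ∀ c : k, φ (algebraMap k R c) = algebraMap k R c)
    (hrange : ∀ r : R, φ r = r ↔ ∃ c : k, algebraMap k R c = r)
    (Φ : (R ⊗[k] D) →+* (R ⊗[k] D))
    (hΦ : ∀ (r : R) (d : D), Φ (r ⊗ₜ[k] d) = φ r ⊗ₜ[k] d) :
    (∀ b : Ideal D,
      (∀ x ∈ Ideal.map (Algebra.TensorProduct.includeRight : D →ₐ[k] R ⊗[k] D) b,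
        Φ x ∈ Ideal.map (Algebra.TensorProduct.includeRight : D →ₐ[k] R ⊗[k] D) b) ∧
      Ideal.comap (Algebra.TensorProduct.includeRight : D →ₐ[k] R ⊗[k] D)
        (Ideal.map (Algebra.TensorProduct.includeRight : D →ₐ[k] R ⊗[k] D) b) = b) ∧
    (∀ a : Ideal (R ⊗[k] D), (∀ x ∈ a, Φ x ∈ a) →
      Ideal.map (Algebra.TensorProduct.includeRight : D →ₐ[k] R ⊗[k] D)
        (Ideal.comap (Algebra.TensorProduct.includeRight : D →ₐ[k] R ⊗[k] D) a) = a) :=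
  ideal_correspondence_of_diffSimple_tensor_general φ hsimple hrange Φ hΦ
end

section
/- Let R be a commutative ring equipped with two commuting ring endomorphisms φ and σ (a φσ-ring). Assume R is φ-simple and that R is a φ-pseudo domain. Then: (1) σ is injective on R; and (2) the zero ideal of R is a finite intersection of σ-pseudo prime ideals, i.e., there are finitely many ideals p_1, …, p_m of R, each σ-pseudo prime, with p_1 ∩ … ∩ p_m = (0). -/
/-- An ideal `p` of a ring with endomorphism `σ` is `σ`-pseudo prime if
`p = q ∩ σ⁻¹(q) ∩ … ∩ σ^{-(d-1)}(q)` for some `d ≥ 1` and some `σ^d`-prime ideal `q`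
(i.e. a prime ideal with `(σ^d)⁻¹(q) = q`). -/
def PseudoPrime {R : Type*} [CommRing R] (σ : R →+* R) (p : Ideal R) : Prop :=
  ∃ d : ℕ, 1 ≤ d ∧ ∃ q : Ideal R, q.IsPrime ∧ Ideal.comap (σ ^ d) q = q ∧
    p = ⨅ i ∈ Finset.range d, Ideal.comap (σ ^ i) q

/-- A ring with endomorphism `φ` is a `φ`-pseudo domain if its zero ideal is
`φ`-pseudo prime. -/
def PseudoDomain {R : Type*} [CommRing R] (φ : R →+* R) : Prop :=
  PseudoPrime φ (⊥ : Ideal R)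
/-!
Commutation makes `ker σ` a `φ`-ideal, so `φ`-simplicity forces `σ` to be injective.
The zero ideal of a `φ`-pseudo domain is a finite intersection of primes, so the ring is
reduced with finitely many minimal primes. As `σ` is injective, every minimal prime is the
contraction along `σ` of a minimal prime; contraction thus maps the finite set of minimal primes
onto itself, hence permutes it, and each minimal prime `p` satisfies `(σ ^ n)⁻¹(p) = p` for some
`n ≥ 1`. The `σ`-pseudo primes `p ∩ σ⁻¹(p) ∩ … ∩ σ^{-(n-1)}(p)` then meet inside the
intersection of all minimal primes, which is zero.
-/

open Function

theorem Set.Finite.mem_periodicPts_of_subset_image {α : Type*} {f : α → α} {s : Set α}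
    (hs : s.Finite) (hsub : s ⊆ f '' s) {x : α} (hx : x ∈ s) : x ∈ periodicPts f := by
  have himage : s = f '' s :=
    Set.eq_of_subset_of_ncard_le hsub (Set.ncard_image_le hs) (hs.image f)
  have hmaps : Set.MapsTo f s s := Set.mapsTo_iff_image_subset.mpr himage.superset
  have hbij : Set.BijOn f s s := (hs.surjOn_iff_bijOn_of_mapsTo hmaps).mp hsub
  have : Finite s := hs.to_subtype
  obtain ⟨n, hn, hper⟩ :=
    mem_periodicPts.mp ((hmaps.restrict_inj.mpr hbij.injOn).mem_periodicPts ⟨x, hx⟩)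
  refine mk_mem_periodicPts hn ?_
  simpa [IsPeriodicPt, IsFixedPt, hmaps.iterate_restrict, Subtype.ext_iff] using hper

theorem Ideal.comap_pow_eq_iterate {R : Type*} [Semiring R] (σ : R →+* R) (n : ℕ)
    (I : Ideal R) : I.comap (σ ^ n) = (Ideal.comap σ)^[n] I := by
  induction n with
  | zero => rfl
  | succ n ih => rw [pow_succ, iterate_succ_apply', ← ih, RingHom.mul_def, Ideal.comap_comap]

theorem DiffSimple.injective_of_comm {R : Type*} [CommRing R] {φ σ : R →+* R}
    (hsimple : DiffSimple φ) (hcomm : φ.comp σ = σ.comp φ) : Injective σ := by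
  have : Nontrivial R := (Submodule.nontrivial_iff R).mp (nontrivial_of_ne _ _ hsimple.1)
  rw [RingHom.injective_iff_ker_eq_bot]
  refine (hsimple.2 (RingHom.ker σ) fun x hx => ?_).resolve_right (RingHom.ker_ne_top σ)
  rw [RingHom.mem_ker] at hx ⊢
  rw [← RingHom.comp_apply, ← hcomm, RingHom.comp_apply, hx, map_zero]

theorem minimalPrimes_subset_image_comap_of_injective {R S : Type*} [CommSemiring R]
    [CommSemiring S] {f : R →+* S} (hf : Injective f) :
    minimalPrimes R ⊆ Ideal.comap f '' minimalPrimes S := by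
  intro p hp
  have hp' : p ∈ ((⊥ : Ideal S).comap f).minimalPrimes := by
    rwa [Ideal.comap_bot_of_injective f hf]
  exact Ideal.exists_minimalPrimes_comap_eq f p hp'

section BiInfPrimesEqBot

variable {R ι : Type*} [CommSemiring R] {s : Finset ι} {P : ι → Ideal R}

theorem minimalPrimes_subset_image_of_biInf_eq_bot (hP : ∀ i ∈ s, (P i).IsPrime)
    (hbot : ⨅ i ∈ s, P i = ⊥) : minimalPrimes R ⊆ P '' s := by
  intro p hp
  have hle : s.inf P ≤ p := by rw [Finset.inf_eq_iInf, hbot]; exact bot_le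
  obtain ⟨i, hi, hPi⟩ := hp.1.1.inf_le'.mp hle
  exact ⟨i, hi, le_antisymm hPi (hp.2 ⟨hP i hi, bot_le⟩ hPi)⟩

theorem sInf_minimalPrimes_eq_bot_of_biInf_eq_bot (hP : ∀ i ∈ s, (P i).IsPrime)
    (hbot : ⨅ i ∈ s, P i = ⊥) : sInf (minimalPrimes R) = ⊥ := by
  refine eq_bot_iff.mpr (hbot ▸ le_iInf₂ fun i hi => ?_)
  have := hP i hi
  obtain ⟨p, hp, hle⟩ := Ideal.exists_minimalPrimes_le (bot_le : ⊥ ≤ P i)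
  exact (sInf_le hp).trans hle

end BiInfPrimesEqBot

theorem exists_comap_pow_eq_self_of_mem_minimalPrimes {R : Type*} [CommSemiring R]
    {σ : R →+* R} (hσ : Injective σ) (hfin : (minimalPrimes R).Finite) {p : Ideal R}
    (hp : p ∈ minimalPrimes R) : ∃ n, 0 < n ∧ p.comap (σ ^ n) = p := by
  obtain ⟨n, hn, hper⟩ := mem_periodicPts.mp <|
    hfin.mem_periodicPts_of_subset_image (minimalPrimes_subset_image_comap_of_injective hσ) hp
  exact ⟨n, hn, (Ideal.comap_pow_eq_iterate σ n p).trans hper⟩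

theorem exists_pseudoPrime_iInf_eq_bot {R : Type*} [CommRing R] {σ : R →+* R}
    (hσ : Injective σ) (hfin : (minimalPrimes R).Finite) (hred : sInf (minimalPrimes R) = ⊥) :
    ∃ (m : ℕ) (p : Fin m → Ideal R), (∀ i, PseudoPrime σ (p i)) ∧ (⨅ i, p i) = ⊥ := by
  have : Finite (minimalPrimes R) := hfin.to_subtype
  obtain ⟨m, ⟨e⟩⟩ := Finite.exists_equiv_fin (minimalPrimes R)
  choose N hN hper using fun i : Fin m =>
    exists_comap_pow_eq_self_of_mem_minimalPrimes hσ hfin (e.symm i).2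
  refine ⟨m, fun i => ⨅ j ∈ Finset.range (N i), Ideal.comap (σ ^ j) (e.symm i : Ideal R),
    fun i => ⟨N i, hN i, _, (e.symm i).2.1.1, hper i, rfl⟩, eq_bot_iff.mpr ?_⟩
  rw [← hred]
  refine le_sInf fun p hp => ?_
  obtain ⟨i, hi⟩ := e.symm.surjective ⟨p, hp⟩
  refine (iInf_le _ i).trans ((iInf₂_le 0 (Finset.mem_range.mpr (hN i))).trans ?_)
  rw [pow_zero, hi]
  exact fun _ hx => hx

/-- Let `R` be a `φ`-simple `φσ`-ring that is a `φ`-pseudo domain.  Then `σ` is injective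
on `R` and the zero ideal of `R` is a finite intersection of `σ`-pseudo prime ideals. -/
theorem sigma_injective_and_zero_is_finite_inter_of_pseudoDomain
    {R : Type*} [CommRing R] (φ σ : R →+* R)
    (hcomm : φ.comp σ = σ.comp φ)
    (hsimple : DiffSimple φ) (hdom : PseudoDomain φ) :
    Function.Injective σ ∧
    ∃ (m : ℕ) (p : Fin m → Ideal R), (∀ i, PseudoPrime σ (p i)) ∧ (⨅ i, p i) = ⊥ := by
  have hσ : Injective σ := hsimple.injective_of_comm hcomm
  obtain ⟨d, -, q, hq, -, hbot⟩ := hdom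
  have hP : ∀ i ∈ Finset.range d, (q.comap (φ ^ i)).IsPrime := fun i _ => hq.comap _
  have hfin : (minimalPrimes R).Finite :=
    ((Finset.range d).finite_toSet.image _).subset
      (minimalPrimes_subset_image_of_biInf_eq_bot hP hbot.symm)
  exact ⟨hσ, exists_pseudoPrime_iInf_eq_bot hσ hfin
    (sInf_minimalPrimes_eq_bot_of_biInf_eq_bot hP hbot.symm)⟩
end

section
/- Let K be a φ-pseudo field and let R be a K-φ-algebra (a commutative K-algebra with a ring endomorphism φ_R satisfying φ_R(algebraMap K R a) = algebraMap K R (φ(a)) for all a ∈ K) which is φ_R-simple and finitely generated as a K-algebra. Then the subring R^{φ_R} = {r ∈ R | φ_R(r) = r} is a field, and every element of R^{φ_R} is algebraic over K^φ: for every r ∈ R^{φ_R} there exists a nonzero polynomial with coefficients in the image of K^φ = {a ∈ K | φ(a) = a} under algebraMap K R that vanishes at r. -/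
/-- A `φ`-pseudo field is a `φ`-simple Noetherian `φ`-ring in which every
non-zero-divisor is a unit. -/
def PseudoField (R : Type*) [CommRing R] (φ : R →+* R) : Prop :=
  DiffSimple φ ∧ IsNoetherianRing R ∧ ∀ x ∈ nonZeroDivisors R, IsUnit x

/-!
A nonzero constant `c` of `R` generates a `φR`-ideal, so it is a unit, and its inverse is again
constant.

A constant `r` is algebraic over `K`: otherwise `q(r)` is a nonzero constant, hence a unit, for
every monic `q ∈ ℤ[X]`. As `K` is Noetherian and its zero divisors are non-units, a maximal
ideal `m` is annihilated by some `b ∉ m`. A residue field `E` of `R` in which `b` and the `p(r)`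
with `p ≢ 0 mod m` survive is of finite type over `(K ⧸ m)(X)`, hence finite over it (Zariski);
clearing denominators of the integral equations of its generators yields one nonzero
`τ ∈ (K ⧸ m)[X]` such that every `q` with `q(r)` a unit divides a power of `τ`. This fails for
more than `deg τ` pairwise coprime nonconstant monic `q`.

Finally, a monic annihilator of `r` of least degree can be chosen with `φ`-fixed coefficients.
-/

open Function Polynomial

namespace DiffSimple

variable {S : Type*} [CommRing S] {f : S →+* S}

theorem nontrivial_s5 (h : DiffSimple f) : Nontrivial S :=
  (Submodule.nontrivial_iff S).1 ⟨⊥, ⊤, h.1⟩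

theorem isUnit_of_apply_eq (h : DiffSimple f) {x : S} (hx : f x = x) (h0 : x ≠ 0) :
    IsUnit x := by
  have hstable : ∀ y ∈ Ideal.span {x}, f y ∈ Ideal.span {x} := by
    intro y hy
    obtain ⟨c, rfl⟩ := Ideal.mem_span_singleton'.1 hy
    exact Ideal.mem_span_singleton'.2 ⟨f c, by rw [map_mul, hx]⟩
  refine Ideal.span_singleton_eq_top.1 ((h.2 _ hstable).resolve_left ?_)
  rwa [Ideal.span_singleton_eq_bot]

theorem isField_eqLocus (h : DiffSimple f) : IsField (RingHom.eqLocus f (RingHom.id S)) := by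
  have := h.nontrivial_s5
  refine ⟨⟨0, 1, Subtype.coe_ne_coe.1 zero_ne_one⟩, mul_comm, ?_⟩
  rintro ⟨x, hx : f x = x⟩ hx0
  obtain ⟨y, hxy⟩ := (h.isUnit_of_apply_eq hx (Subtype.coe_ne_coe.2 hx0)).exists_right_inv
  have hy : f y = y :=
    calc f y = f y * (x * y) := by rw [hxy, mul_one]
      _ = f (y * x) * y := by rw [map_mul, hx]; ring
      _ = y := by rw [mul_comm y, hxy, map_one, one_mul]
  exact ⟨⟨y, hy⟩, Subtype.ext hxy⟩

theorem isReduced (h : DiffSimple f) : IsReduced S := by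
  have := h.nontrivial_s5
  have hstable : ∀ x ∈ nilradical S, f x ∈ nilradical S := fun x hx =>
    (mem_nilradical.1 hx).map f
  have hnil : nilradical S = ⊥ := (h.2 _ hstable).resolve_right fun htop =>
    not_isNilpotent_one (htop ▸ Submodule.mem_top : (1 : S) ∈ nilradical S)
  exact ⟨fun x hx => by rwa [← mem_nilradical, hnil, Ideal.mem_bot] at hx⟩

end DiffSimple

theorem PseudoField.exists_notMem_forall_mul_eq_zero {K : Type*} [CommRing K] {φ : K →+* K}
    (h : PseudoField K φ) {m : Ideal K} (hm : m.IsMaximal) :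
    ∃ b ∉ m, ∀ a ∈ m, b * a = 0 := by
  have := h.2.1
  have hdisj : Disjoint (m : Set K) (nonZeroDivisors K) := Set.disjoint_left.2 fun x hx hx' =>
    hm.ne_top (m.eq_top_of_isUnit_mem hx (h.2.2 x hx'))
  obtain ⟨b, hb, hb0⟩ :=
    SetLike.exists_of_lt (Ideal.bot_lt_annihilator_of_disjoint_nonZeroDivisors hdisj)
  have hbm : ∀ a ∈ m, b * a = 0 := fun a ha =>
    congrArg Subtype.val (Module.mem_annihilator.1 hb ⟨a, ha⟩)
  have := h.1.isReduced
  refine ⟨b, fun hbm' => hb0 ?_, hbm⟩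
  exact IsReduced.eq_zero b ⟨2, by rw [pow_two]; exact hbm b hbm'⟩

namespace Polynomial

/-- Euclid's construction: `X * ∏ q + 1` is coprime to each `q`. -/
theorem exists_finset_monic_pairwise_isCoprime (R : Type*) [CommRing R] [Nontrivial R] (n : ℕ) :
    ∃ t : Finset R[X], t.card = n ∧ (∀ q ∈ t, q.Monic ∧ q.natDegree ≠ 0) ∧
      (t : Set R[X]).Pairwise IsCoprime := by
  classical
  induction n with
  | zero => exact ⟨∅, rfl, by simp, by simp⟩
  | succ n ih =>
    obtain ⟨t, rfl, ht, hcop⟩ := ih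
    have hprodt : (∏ q ∈ t, q).Monic := monic_prod_of_monic _ _ fun q hq => (ht q hq).1
    have hprod : (X * ∏ q ∈ t, q).Monic := monic_X.mul hprodt
    have hdeg : 0 < (X * ∏ q ∈ t, q).natDegree := by
      rw [monic_X.natDegree_mul hprodt, natDegree_X]
      omega
    have hdeg' : degree (1 : R[X]) < degree (X * ∏ q ∈ t, q) := by
      rwa [degree_one, ← natDegree_pos_iff_degree_pos]
    set P := X * ∏ q ∈ t, q + 1
    have hP : P.Monic ∧ P.natDegree ≠ 0 :=
      ⟨hprod.add_of_left hdeg', by rw [natDegree_add_eq_left_of_degree_lt hdeg']; omega⟩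
    have hPcop : ∀ q ∈ t, IsCoprime q P := fun q hq =>
      ⟨-(X * ∏ p ∈ t.erase q, p), 1, by
        rw [show P = X * (q * ∏ p ∈ t.erase q, p) + 1 by
          rw [Finset.mul_prod_erase t (fun p => p) hq]]
        ring⟩
    have hPt : P ∉ t := fun hPt =>
      hP.2 (by rw [hP.1.isUnit_iff.1 (isCoprime_self.1 (hPcop P hPt)), natDegree_one])
    refine ⟨insert P t, Finset.card_insert_of_notMem hPt, Finset.forall_mem_insert _ _ _ |>.2
      ⟨hP, ht⟩, ?_⟩
    rw [Finset.coe_insert]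
    exact hcop.insert fun q hq _ => ⟨(hPcop q hq).symm, hPcop q hq⟩

/-- The gcds of the `f i` with `τ` are pairwise coprime non-units dividing `τ`. -/
theorem card_le_natDegree_of_forall_dvd_pow {k ι : Type*} [Field k] {τ : k[X]} (hτ : τ ≠ 0)
    {s : Finset ι} {f : ι → k[X]} (hcop : (s : Set ι).Pairwise (IsCoprime on f))
    (hunit : ∀ i ∈ s, ¬IsUnit (f i)) (hdvd : ∀ i ∈ s, ∃ N, f i ∣ τ ^ N) :
    s.card ≤ τ.natDegree := by
  classical
  set g := fun i => EuclideanDomain.gcd (f i) τ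
  have hg0 : ∀ i, g i ≠ 0 := fun i h => hτ (EuclideanDomain.gcd_eq_zero_iff.1 h).2
  have hg : ∀ i ∈ s, 0 < (g i).natDegree := by
    intro i hi
    refine natDegree_pos_iff_degree_pos.2 <|
      degree_pos_of_ne_zero_of_nonunit (hg0 i) fun hu => ?_
    obtain ⟨N, hN⟩ := hdvd i hi
    exact hunit i hi ((EuclideanDomain.gcd_isUnit_iff.1 hu).pow_right.isUnit_of_dvd' dvd_rfl hN)
  have hprod : ∏ i ∈ s, g i ∣ τ :=
    Finset.prod_dvd_of_coprime
      (hcop.mono' fun i j h => (h.of_isCoprime_of_dvd_left (EuclideanDomain.gcd_dvd_left _ _))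
        |>.of_isCoprime_of_dvd_right (EuclideanDomain.gcd_dvd_left _ _))
      fun i _ => EuclideanDomain.gcd_dvd_right _ _
  calc s.card = ∑ i ∈ s, 1 := by simp
    _ ≤ ∑ i ∈ s, (g i).natDegree := Finset.sum_le_sum hg
    _ = (∏ i ∈ s, g i).natDegree := (natDegree_prod _ _ fun i _ => hg0 i).symm
    _ ≤ τ.natDegree := natDegree_le_of_dvd hprod hτ

end Polynomial

universe u

theorem exists_ringHom_field_of_zero_notMem {R : Type u} [CommRing R] {S : Submonoid R}
    (h0 : (0 : R) ∉ S) :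
    ∃ (E : Type u) (_ : Field E) (μ : R →+* E),
      (∀ s ∈ S, μ s ≠ 0) ∧ ∀ x : E, ∃ y : R, ∃ s ∈ S, μ s * x = μ y := by
  have : Nontrivial (Localization S) := OreLocalization.nontrivial_iff.2 h0
  obtain ⟨Q, hQ⟩ := Ideal.exists_maximal (Localization S)
  let := Ideal.Quotient.field Q
  refine ⟨_, inferInstance, (Ideal.Quotient.mk Q).comp (algebraMap R _), fun s hs h => ?_, ?_⟩
  · have hu : IsUnit (algebraMap R (Localization S) s) :=
      IsLocalization.map_units _ ⟨s, hs⟩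
    exact hQ.ne_top (Q.eq_top_of_isUnit_mem (Ideal.Quotient.eq_zero_iff_mem.1 h) hu)
  · intro x
    obtain ⟨x, rfl⟩ := Ideal.Quotient.mk_surjective x
    obtain ⟨⟨y, s⟩, hys⟩ := IsLocalization.surj S x
    exact ⟨y, s, s.2, by simp only [RingHom.comp_apply, ← map_mul, mul_comm _ x, hys]⟩

section GenericIntegrality

variable {A : Type*} [CommRing A] [IsDomain A]

theorem exists_isIntegral_pow_smul_of_mem_adjoin {L E : Type*} [Field L] [Algebra A L]
    [IsFractionRing A L] [CommRing E] [Algebra A E] [Algebra L E] [IsScalarTower A L E]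
    (s : Finset E) (hs : ∀ x ∈ s, IsIntegral L x) :
    ∃ τ : A, τ ≠ 0 ∧
      ∀ x ∈ Algebra.adjoin A (s : Set E), ∃ N : ℕ, IsIntegral A (τ ^ N • x) := by
  classical
  have hden : ∀ x ∈ s, ∃ d : A, d ≠ 0 ∧ IsIntegral A (d • x) := fun x hx =>
    let ⟨d, hd⟩ := (hs x hx).exists_multiple_integral_of_isLocalization (nonZeroDivisors A) x
    ⟨d, nonZeroDivisors.coe_ne_zero d, hd⟩
  choose! d hd0 hd using hden
  obtain ⟨τ, hτ0, hτ⟩ : ∃ τ : A, τ ≠ 0 ∧ ∀ g ∈ s, IsIntegral A (τ • g) :=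
    ⟨∏ x ∈ s, d x, Finset.prod_ne_zero_iff.2 hd0, fun g hg => by
      rw [← Finset.mul_prod_erase s d hg, mul_comm, mul_smul]
      exact (hd g hg).smul _⟩
  refine ⟨τ, hτ0, fun x hx => ?_⟩
  induction hx using Algebra.adjoin_induction with
  | mem g hg => exact ⟨1, by rw [pow_one]; exact hτ g hg⟩
  | algebraMap a => exact ⟨0, by rw [pow_zero, one_smul]; exact isIntegral_algebraMap⟩
  | add x y _ _ hx hy =>
    obtain ⟨N, hN⟩ := hx
    obtain ⟨M, hM⟩ := hy
    refine ⟨N + M, ?_⟩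
    rw [smul_add, pow_add, mul_smul, mul_smul, smul_comm (τ ^ N) (τ ^ M) x]
    exact (hN.smul (τ ^ M)).add (hM.smul (τ ^ N))
  | mul x y _ _ hx hy =>
    obtain ⟨N, hN⟩ := hx
    obtain ⟨M, hM⟩ := hy
    exact ⟨N + M, by rw [pow_add, ← smul_mul_smul_comm]; exact hN.mul hM⟩

theorem exists_dvd_pow_of_mul_eq_one [IsIntegrallyClosed A] {E : Type*} [Field E] [Algebra A E]
    (hinj : Function.Injective (algebraMap A E)) (s : Finset E)
    (hfrac : ∀ x : E, ∃ b : A, b ≠ 0 ∧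
      algebraMap A E b * x ∈ Algebra.adjoin A (s : Set E)) :
    ∃ τ : A, τ ≠ 0 ∧ ∀ q : A, ∀ u ∈ Algebra.adjoin A (s : Set E),
      algebraMap A E q * u = 1 → ∃ N : ℕ, q ∣ τ ^ N := by
  let L := FractionRing A
  let : Algebra L E := (IsFractionRing.lift hinj).toAlgebra
  have : IsScalarTower A L E :=
    IsScalarTower.of_algebraMap_eq fun a => (IsFractionRing.lift_algebraMap hinj a).symm
  have : Algebra.FiniteType L E := by
    refine ⟨⟨s, eq_top_iff.2 fun x _ => ?_⟩⟩
    obtain ⟨b, hb, hbx⟩ := hfrac x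
    have hb' : algebraMap L E (algebraMap A L b) ≠ 0 := by
      rw [← IsScalarTower.algebraMap_apply]
      exact fun h => hb (hinj (h.trans (map_zero _).symm))
    have hbx' : algebraMap L E (algebraMap A L b) * x ∈ Algebra.adjoin L (s : Set E) := by
      rw [← IsScalarTower.algebraMap_apply]
      have hle : Algebra.adjoin A (s : Set E) ≤
          (Algebra.adjoin L (s : Set E)).restrictScalars A :=
        Algebra.adjoin_le Algebra.subset_adjoin
      exact hle hbx
    rw [← inv_mul_cancel_left₀ hb' x, ← map_inv₀]
    exact mul_mem (Subalgebra.algebraMap_mem _ _) hbx'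
  have := finite_of_finite_type_of_isJacobsonRing L E
  obtain ⟨τ, hτ, hint⟩ :=
    exists_isIntegral_pow_smul_of_mem_adjoin (A := A) (L := L) s fun x _ =>
      Algebra.IsIntegral.isIntegral x
  refine ⟨τ, hτ, fun q u hu hqu => ?_⟩
  obtain ⟨N, hN⟩ := hint u hu
  have hq : algebraMap A L q ≠ 0 := by
    rintro h
    rw [IsScalarTower.algebraMap_apply A L E, h, map_zero, zero_mul] at hqu
    exact zero_ne_one hqu
  have hy : τ ^ N • u = algebraMap L E (algebraMap A L (τ ^ N) / algebraMap A L q) := by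
    rw [Algebra.smul_def, eq_inv_of_mul_eq_one_right hqu, map_div₀,
      ← IsScalarTower.algebraMap_apply, ← IsScalarTower.algebraMap_apply, div_eq_mul_inv]
  rw [hy, ← IsScalarTower.coe_toAlgHom' A L E,
    isIntegral_algHom_iff _ (algebraMap L E).injective] at hN
  obtain ⟨z, hz⟩ := IsIntegrallyClosed.isIntegral_iff.1 hN
  refine ⟨N, z, IsFractionRing.injective A L ?_⟩
  rw [map_mul, hz, mul_div_cancel₀ _ hq]

end GenericIntegrality

section ResidueField

variable {K R : Type*} [CommRing K] [CommRing R] [Algebra K R] [Algebra.FiniteType K R]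
  {m : Ideal K} [m.IsMaximal] {r : R}

theorem exists_dvd_pow_of_ringHom_field {E : Type*} [Field E] (μ : R →+* E)
    (hμm : ∀ a ∈ m, μ (algebraMap K R a) = 0)
    (hμr : ∀ p : K[X], p.map (Ideal.Quotient.mk m) ≠ 0 → μ (aeval r p) ≠ 0)
    (hfrac : ∀ x : E, ∃ p : K[X], p.map (Ideal.Quotient.mk m) ≠ 0 ∧
      ∃ y, μ (aeval r p) * x = μ y) :
    ∃ τ : (K ⧸ m)[X], τ ≠ 0 ∧
      ∀ p : K[X], IsUnit (aeval r p) → ∃ N : ℕ, p.map (Ideal.Quotient.mk m) ∣ τ ^ N := by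
  classical
  let := Ideal.Quotient.field m
  set ψ : (K ⧸ m)[X] →+* E :=
    eval₂RingHom (Ideal.Quotient.lift m (μ.comp (algebraMap K R)) hμm) (μ r)
  have hψ : ∀ p : K[X], ψ (p.map (Ideal.Quotient.mk m)) = μ (aeval r p) := by
    intro p
    rw [coe_eval₂RingHom, eval₂_map, aeval_def, hom_eval₂]
    rfl
  have hψinj : Function.Injective ψ := by
    refine (injective_iff_map_eq_zero ψ).2 fun p hp => by_contra fun hp0 => ?_
    obtain ⟨p, rfl⟩ := map_surjective _ Ideal.Quotient.mk_surjective p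
    exact hμr p hp0 (hψ p ▸ hp)
  let := ψ.toAlgebra
  obtain ⟨s, hs⟩ := Algebra.FiniteType.out (R := K) (A := R)
  have hμadjoin : ∀ x : R, μ x ∈ Algebra.adjoin (K ⧸ m)[X] (s.image μ : Set E) := by
    intro x
    have hx : x ∈ Algebra.adjoin K (s : Set R) := hs ▸ Algebra.mem_top
    induction hx using Algebra.adjoin_induction with
    | mem y hy => exact Algebra.subset_adjoin (Finset.mem_coe.2 (Finset.mem_image_of_mem μ hy))
    | algebraMap a =>
      rw [← aeval_C r a, ← hψ, map_C]
      exact Subalgebra.algebraMap_mem _ _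
    | add x y _ _ hx hy => rw [map_add]; exact add_mem hx hy
    | mul x y _ _ hx hy => rw [map_mul]; exact mul_mem hx hy
  obtain ⟨τ, hτ, hdvd⟩ := exists_dvd_pow_of_mul_eq_one hψinj (s.image μ) fun x => by
    obtain ⟨p, hp, y, hxy⟩ := hfrac x
    exact ⟨_, hp, by rw [RingHom.algebraMap_toAlgebra, hψ, hxy]; exact hμadjoin y⟩
  refine ⟨τ, hτ, fun p hp => ?_⟩
  obtain ⟨w, hw⟩ := hp.exists_right_inv
  refine hdvd _ (μ w) (hμadjoin w) ?_
  rw [RingHom.algebraMap_toAlgebra, hψ, ← map_mul, hw, map_one]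

theorem exists_dvd_pow_of_transcendental {b : K} (hb : b ∉ m) (hbm : ∀ a ∈ m, b * a = 0)
    (hr : Transcendental K r) :
    ∃ τ : (K ⧸ m)[X], τ ≠ 0 ∧
      ∀ p : K[X], IsUnit (aeval r p) → ∃ N : ℕ, p.map (Ideal.Quotient.mk m) ∣ τ ^ N := by
  have := RingHom.ker_isPrime (mapRingHom (Ideal.Quotient.mk m))
  set S : Submonoid R :=
    (RingHom.ker (mapRingHom (Ideal.Quotient.mk m))).primeCompl.map (aeval r)
  have hS : ∀ p : K[X], p.map (Ideal.Quotient.mk m) ≠ 0 → aeval r p ∈ S := fun p hp =>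
    Submonoid.mem_map.2 ⟨p, hp, rfl⟩
  have h0 : (0 : R) ∉ S := fun h => by
    obtain ⟨p, hp, hp0⟩ := Submonoid.mem_map.1 h
    exact hr ⟨p, fun h => hp (by rw [h]; exact zero_mem _), hp0⟩
  obtain ⟨E, _, μ, hμS, hfrac⟩ := exists_ringHom_field_of_zero_notMem h0
  refine exists_dvd_pow_of_ringHom_field μ (fun a ha => ?_) (fun p hp => hμS _ (hS p hp))
    fun x => ?_
  · have hμb : μ (algebraMap K R b) ≠ 0 := by
      refine hμS _ (aeval_C r b ▸ hS _ ?_)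
      rwa [map_C, ne_eq, C_eq_zero, Ideal.Quotient.eq_zero_iff_mem]
    have : μ (algebraMap K R b) * μ (algebraMap K R a) = 0 := by
      rw [← map_mul, ← map_mul, hbm a ha, map_zero, map_zero]
    exact (mul_eq_zero.1 this).resolve_left hμb
  · obtain ⟨y, _, hyS, hxy⟩ := hfrac x
    obtain ⟨p, hp, rfl⟩ := Submonoid.mem_map.1 hyS
    exact ⟨p, hp, y, hxy⟩

end ResidueField

theorem PseudoField.isAlgebraic_of_apply_eq {K R : Type*} [CommRing K] [CommRing R] [Algebra K R]
    [Algebra.FiniteType K R] {φ : K →+* K} {φR : R →+* R} (hK : PseudoField K φ)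
    (hR : DiffSimple φR) {r : R} (hr : φR r = r) : IsAlgebraic K r := by
  have := hK.1.nontrivial_s5
  obtain ⟨m, hm⟩ := Ideal.exists_maximal K
  let := Ideal.Quotient.field m
  obtain ⟨b, hb, hbm⟩ := hK.exists_notMem_forall_mul_eq_zero hm
  by_contra htr
  obtain ⟨τ, hτ, hdvd⟩ := exists_dvd_pow_of_transcendental hb hbm htr
  obtain ⟨t, ht, hmon, hcop⟩ := exists_finset_monic_pairwise_isCoprime ℤ (τ.natDegree + 1)
  have hmap : ∀ q : ℤ[X], (q.map (algebraMap ℤ K)).map (Ideal.Quotient.mk m) =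
      q.map (algebraMap ℤ (K ⧸ m)) := fun q => by
    rw [Polynomial.map_map, RingHom.ext_int ((Ideal.Quotient.mk m).comp (algebraMap ℤ K))
      (algebraMap ℤ (K ⧸ m))]
  have hunit : ∀ q ∈ t, IsUnit (aeval r (q.map (algebraMap ℤ K))) := by
    intro q hq
    rw [aeval_map_algebraMap]
    refine hR.isUnit_of_apply_eq ?_ fun h =>
      htr ⟨_, ((hmon q hq).1.map (algebraMap ℤ K)).ne_zero, by rwa [aeval_map_algebraMap]⟩
    simpa [hr] using (aeval_algHom_apply φR.toIntAlgHom r q).symm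
  have hnonunit : ∀ q ∈ t, ¬IsUnit (q.map (algebraMap ℤ (K ⧸ m))) := fun q hq hu =>
    (hmon q hq).2 <| by
      rw [← (hmon q hq).1.natDegree_map (algebraMap ℤ (K ⧸ m)),
        ((hmon q hq).1.map _).isUnit_iff.1 hu, natDegree_one]
  have hdvd' : ∀ q ∈ t, ∃ N, q.map (algebraMap ℤ (K ⧸ m)) ∣ τ ^ N := fun q hq => by
    rw [← hmap]
    exact hdvd _ (hunit q hq)
  have hcop' : (t : Set ℤ[X]).Pairwise (IsCoprime on fun q => q.map (algebraMap ℤ (K ⧸ m))) :=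
    hcop.mono' fun _ _ h => h.map (mapRingHom (algebraMap ℤ (K ⧸ m)))
  have := card_le_natDegree_of_forall_dvd_pow hτ hcop' hnonunit hdvd'
  omega

section FixedCoefficients

variable {K R : Type*} [CommRing K] [CommRing R] [Algebra K R] {φ : K →+* K} {φR : R →+* R}

theorem aeval_map_of_apply_eq (hcomp : ∀ a : K, φR (algebraMap K R a) = algebraMap K R (φ a))
    {r : R} (hr : φR r = r) (p : K[X]) : aeval r (p.map φ) = φR (aeval r p) := by
  rw [aeval_def, aeval_def, eval₂_map, hom_eval₂, hr]
  congr 1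
  ext a
  exact (hcomp a).symm

/-- If `n` is the least degree of a nonzero annihilator of `r`, the leading coefficients of the
annihilators of degree `≤ n` form a nonzero `φ`-ideal, so some annihilator `p` of degree `n` is
monic; then `p.map φ - p` is an annihilator of smaller degree, hence zero. -/
theorem DiffSimple.exists_monic_fixed_of_isAlgebraic (hK : DiffSimple φ)
    (hcomp : ∀ a : K, φR (algebraMap K R a) = algebraMap K R (φ a)) {r : R} (hr : φR r = r)
    (halg : IsAlgebraic K r) :
    ∃ p : K[X], p.Monic ∧ (∀ m, φ (p.coeff m) = p.coeff m) ∧ aeval r p = 0 := by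
  classical
  have := hK.nontrivial_s5
  set I := RingHom.ker (aeval r : K[X] →ₐ[K] R)
  have hI : ∀ p ∈ I, p.map φ ∈ I := fun p hp => by
    rw [RingHom.mem_ker] at hp ⊢
    rw [aeval_map_of_apply_eq hcomp hr, hp, map_zero]
  have hex : ∃ n, ∃ p ∈ I, p ≠ 0 ∧ p.natDegree = n :=
    let ⟨p, hp0, hp⟩ := halg; ⟨_, p, hp, hp0, rfl⟩
  obtain ⟨p₀, hp₀I, hp₀, hp₀deg⟩ := Nat.find_spec hex
  have hmin : ∀ p ∈ I, p ≠ 0 → Nat.find hex ≤ p.natDegree := fun p hp hp0 =>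
    Nat.find_min' hex ⟨p, hp, hp0, rfl⟩
  set J := I.leadingCoeffNth (Nat.find hex)
  have hJ : ∀ a ∈ J, φ a ∈ J := by
    intro a ha
    obtain ⟨p, hpI, hpdeg, rfl⟩ := (I.mem_leadingCoeffNth _ _).1 ha
    by_cases hφ : φ p.leadingCoeff = 0
    · rw [hφ]; exact J.zero_mem
    · exact (I.mem_leadingCoeffNth _ _).2 ⟨p.map φ, hI p hpI, degree_map_le.trans hpdeg,
        leadingCoeff_map_of_leadingCoeff_ne_zero φ hφ⟩
  have hJtop : J = ⊤ := (hK.2 J hJ).resolve_left fun hbot => hp₀ <| leadingCoeff_eq_zero.1 <| by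
    rw [← Ideal.mem_bot, ← hbot]
    exact (I.mem_leadingCoeffNth _ _).2 ⟨p₀, hp₀I, hp₀deg ▸ degree_le_natDegree, rfl⟩
  obtain ⟨p, hpI, hpdeg, hp : p.Monic⟩ :=
    (I.mem_leadingCoeffNth _ 1).1 (hJtop ▸ Submodule.mem_top)
  have hpmap : p.map φ = p := by
    by_contra hne
    have hlt : (p.map φ - p).degree < Nat.find hex := by
      refine (degree_sub_lt_left (hp.degree_map φ) (hp.map φ).ne_zero ?_).trans_le
        ((hp.degree_map φ).symm ▸ hpdeg)
      rw [(hp.map φ).leadingCoeff, hp.leadingCoeff]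
    exact (hmin _ (sub_mem (hI p hpI) hpI) (sub_ne_zero.2 hne)).not_gt
      (natDegree_lt_iff_degree_lt (sub_ne_zero.2 hne) |>.2 hlt)
  refine ⟨p, hp, fun m => ?_, hpI⟩
  rw [← coeff_map, hpmap]

end FixedCoefficients

/-- Let `K` be a `φ`-pseudo field and `R` a `φ`-simple `K`-`φ`-algebra that is finitely
generated as a `K`-algebra.  Then the `φ`-constants of `R` form a field, and every
`φ`-constant of `R` is algebraic over `K^φ` (it is a root of a nonzero polynomial whose
coefficients come from the image of `K^φ` in `R`). -/
theorem constants_field_and_algebraic_of_finiteType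
    {K R : Type*} [CommRing K] [CommRing R] [Algebra K R]
    (φ : K →+* K) (φR : R →+* R)
    (hPF : PseudoField K φ)
    (hcomp : ∀ a : K, φR (algebraMap K R a) = algebraMap K R (φ a))
    (hsimple : DiffSimple φR)
    (hfg : Algebra.FiniteType K R) :
    IsField ↥(RingHom.eqLocus φR (RingHom.id R)) ∧
    ∀ r : R, φR r = r → ∃ p : Polynomial R, p ≠ 0 ∧
      (∀ m : ℕ, ∃ a : K, φ a = a ∧ algebraMap K R a = p.coeff m) ∧
      Polynomial.eval r p = 0 := by
  refine ⟨hsimple.isField_eqLocus, fun r hr => ?_⟩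
  have := hsimple.nontrivial_s5
  obtain ⟨p, hp, hfixed, hpr⟩ :=
    hPF.1.exists_monic_fixed_of_isAlgebraic hcomp hr (hPF.isAlgebraic_of_apply_eq hsimple hr)
  refine ⟨p.map (algebraMap K R), (hp.map _).ne_zero,
    fun m => ⟨p.coeff m, hfixed m, (coeff_map _ m).symm⟩, ?_⟩
  rwa [eval_map, ← aeval_def]
end

section
/- Let K be a field and let R and T be finitely generated commutative K-algebras. Let a be a proper ideal of R ⊗_K T and b a proper ideal of T ⊗_K R such that the preimage of a under the canonical map T → R ⊗_K T (t ↦ 1 ⊗ t) equals the preimage of b under the canonical map T → T ⊗_K R (t ↦ t ⊗ 1), as ideals of T. Then the ideal of R ⊗_K T ⊗_K R generated by the image of a under the ring homomorphism determined by r ⊗ t ↦ r ⊗ t ⊗ 1 together with the image of b under the ring homomorphism determined by t ⊗ r ↦ 1 ⊗ t ⊗ r is a proper ideal (does not contain 1). (This is the prolongation lemma in the generality established by its proof; the paper's version is the case where T is a d-fold tensor power of R.) -/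
/-!
Pick a minimal prime `q` of the common preimage of `a` and `b` in `T`. Minimal primes over a
contraction are contractions of primes, so `q` is the preimage of primes `P ⊇ a` of `R ⊗ T` and
`Q ⊇ b` of `T ⊗ R`. The domains `(R ⊗ T) ⧸ P` and `(T ⊗ R) ⧸ Q` both contain `T ⧸ q`, and their
tensor product over `T ⧸ q` is a nonzero ring. The two quotient maps glue to a ring map from
`R ⊗ T ⊗ R` to it which kills `a` and `b`, so these cannot generate the unit ideal.
-/

open scoped TensorProduct

universe u v

theorem Ideal.exists_isPrime_comap_eq_of_comap_eq {D A B : Type*} [CommRing D] [CommRing A]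
    [CommRing B] (f : D →+* A) (g : D →+* B) {a : Ideal A} {b : Ideal B} (ha : a ≠ ⊤)
    (hab : a.comap f = b.comap g) :
    ∃ P : Ideal A, ∃ Q : Ideal B, P.IsPrime ∧ Q.IsPrime ∧ a ≤ P ∧ b ≤ Q ∧
      P.comap f = Q.comap g := by
  obtain ⟨q, hq⟩ := Ideal.nonempty_minimalPrimes (Ideal.comap_ne_top f ha)
  obtain ⟨P, hP, haP, rfl⟩ := Ideal.exists_comap_eq_of_mem_minimalPrimes f q hq
  obtain ⟨Q, hQ, hbQ, hQP⟩ := Ideal.exists_comap_eq_of_mem_minimalPrimes g _ (hab ▸ hq)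
  exact ⟨P, Q, hP, hQ, haP, hbQ, hQP.symm⟩

theorem exists_ringHom_comp_eq_of_injective {D : Type*} {A : Type u} {B : Type v}
    [CommRing D] [CommRing A] [CommRing B] [IsDomain A] [IsDomain B]
    (f : D →+* A) (g : D →+* B) (hf : Function.Injective f) (hg : Function.Injective g) :
    ∃ (E : Type (max u v)) (_ : CommRing E) (_ : Nontrivial E) (α : A →+* E) (β : B →+* E),
      α.comp f = β.comp g := by
  algebraize [f, g]
  exact ⟨A ⊗[D] B, inferInstance,
    Algebra.TensorProduct.nontrivial_of_algebraMap_injective_of_isDomain D A B hf hg,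
    Algebra.TensorProduct.includeLeftRingHom, Algebra.TensorProduct.includeRight.toRingHom,
    Algebra.TensorProduct.includeLeftRingHom_comp_algebraMap⟩

theorem exists_ringHom_comp_eq_of_comap_eq {D : Type*} {A : Type u} {B : Type v}
    [CommRing D] [CommRing A] [CommRing B] (f : D →+* A) (g : D →+* B)
    (P : Ideal A) (Q : Ideal B) [P.IsPrime] [Q.IsPrime] (hPQ : P.comap f = Q.comap g) :
    ∃ (E : Type (max u v)) (_ : CommRing E) (_ : Nontrivial E) (α : A →+* E) (β : B →+* E),
      α.comp f = β.comp g ∧ (∀ x ∈ P, α x = 0) ∧ ∀ y ∈ Q, β y = 0 := by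
  obtain ⟨E, _, _, α, β, hαβ⟩ := exists_ringHom_comp_eq_of_injective
    (Ideal.quotientMap P f le_rfl) (Ideal.quotientMap Q g hPQ.le)
    Ideal.quotientMap_injective (Ideal.quotientMap_injective' hPQ.ge)
  refine ⟨E, inferInstance, inferInstance, α.comp (Ideal.Quotient.mk P),
    β.comp (Ideal.Quotient.mk Q), ?_,
    fun x hx => by simp [Ideal.Quotient.eq_zero_iff_mem.2 hx],
    fun y hy => by simp [Ideal.Quotient.eq_zero_iff_mem.2 hy]⟩
  ext d
  exact congr($hαβ (Ideal.Quotient.mk _ d))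

open Algebra.TensorProduct in
theorem Algebra.TensorProduct.exists_ringHom_of_comp_includeRight_eq {K R T E : Type*}
    [CommSemiring K] [CommSemiring R] [CommSemiring T] [CommSemiring E]
    [Algebra K R] [Algebra K T] (α : R ⊗[K] T →+* E) (β : T ⊗[K] R →+* E)
    (h : α.comp (includeRight : T →ₐ[K] R ⊗[K] T).toRingHom =
      β.comp (includeLeft : T →ₐ[K] T ⊗[K] R).toRingHom) :
    ∃ ψ : (R ⊗[K] T) ⊗[K] R →+* E, (∀ x, ψ (x ⊗ₜ 1) = α x) ∧
      ∀ y, ψ (map (includeRight : T →ₐ[K] R ⊗[K] T) (AlgHom.id K R) y) = β y := by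
  -- `E` becomes a `K`-algebra through `α`; `β` is `K`-linear since it agrees with `α` on `T`.
  let : Algebra K E := (α.comp (algebraMap K _)).toAlgebra
  let α' : R ⊗[K] T →ₐ[K] E := { α with commutes' := fun _ => rfl }
  let β' : T ⊗[K] R →ₐ[K] E :=
    { β with
      commutes' := fun k => by
        change β (algebraMap K _ k) = α (algebraMap K _ k)
        rw [← includeLeft.commutes, ← (includeRight : T →ₐ[K] R ⊗[K] T).commutes]
        exact congr($h.symm (algebraMap K T k)) }
  let ψ := lift α' (β'.comp includeRight) fun _ _ => .all _ _
  have hψβ : ψ.comp (map includeRight (AlgHom.id K R)) = β' := by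
    ext t
    · simpa [ψ, α', β', ← one_def] using congr($h t)
    · simp [ψ, ← one_def]
  exact ⟨ψ, fun x => by simp [ψ, α', ← one_def], fun y => congr($hψβ y)⟩

theorem Ideal.map_sup_map_ne_top_of_map_eq_zero {A B C E F G : Type*} [CommRing A] [CommRing B]
    [CommRing C] [CommRing E] [Nontrivial E] [FunLike F A C] [RingHomClass F A C]
    [FunLike G B C] [RingHomClass G B C] (ψ : C →+* E) (f : F) (g : G)
    {a : Ideal A} {b : Ideal B} (ha : ∀ x ∈ a, ψ (f x) = 0) (hb : ∀ y ∈ b, ψ (g y) = 0) :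
    a.map f ⊔ b.map g ≠ ⊤ :=
  ne_top_of_le_ne_top (RingHom.ker_ne_top ψ)
    (sup_le (Ideal.map_le_iff_le_comap.2 ha) (Ideal.map_le_iff_le_comap.2 hb))

theorem prolongation_lemma_general
    {K R T : Type*} [Field K] [CommRing R] [CommRing T]
    [Algebra K R] [Algebra K T]
    (a : Ideal (R ⊗[K] T)) (ha : a ≠ ⊤)
    (b : Ideal (T ⊗[K] R))
    (hmatch : Ideal.comap (Algebra.TensorProduct.includeRight : T →ₐ[K] R ⊗[K] T) a
            = Ideal.comap (Algebra.TensorProduct.includeLeft : T →ₐ[K] T ⊗[K] R) b) :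
    Ideal.map
        (Algebra.TensorProduct.includeLeft :
          (R ⊗[K] T) →ₐ[K] (R ⊗[K] T) ⊗[K] R) a ⊔
      Ideal.map
        (Algebra.TensorProduct.map
          (Algebra.TensorProduct.includeRight : T →ₐ[K] R ⊗[K] T)
          (AlgHom.id K R) :
          (T ⊗[K] R) →ₐ[K] (R ⊗[K] T) ⊗[K] R) b ≠ ⊤ := by
  obtain ⟨P, Q, _, _, haP, hbQ, hPQ⟩ := Ideal.exists_isPrime_comap_eq_of_comap_eq _ _ ha hmatch
  obtain ⟨E, _, _, α, β, hαβ, hαP, hβQ⟩ := exists_ringHom_comp_eq_of_comap_eq _ _ P Q hPQ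
  obtain ⟨ψ, hψα, hψβ⟩ :=
    Algebra.TensorProduct.exists_ringHom_of_comp_includeRight_eq α β hαβ
  exact Ideal.map_sup_map_ne_top_of_map_eq_zero ψ _ _
    (fun x hx => (hψα x).trans (hαP x (haP hx))) (fun y hy => (hψβ y).trans (hβQ y (hbQ hy)))

/-- The prolongation lemma: for finitely generated algebras `R`, `T` over a field `K`
and proper ideals `a ⊆ R ⊗ T`, `b ⊆ T ⊗ R` whose preimages in the middle factor `T`
coincide, the ideal of `R ⊗ T ⊗ R` generated by (the images of) `a` and `b` is proper. -/
theorem prolongation_lemma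
    {K R T : Type*} [Field K] [CommRing R] [CommRing T]
    [Algebra K R] [Algebra K T]
    (hR : Algebra.FiniteType K R) (hT : Algebra.FiniteType K T)
    (a : Ideal (R ⊗[K] T)) (ha : a ≠ ⊤)
    (b : Ideal (T ⊗[K] R)) (hb : b ≠ ⊤)
    (hmatch : Ideal.comap (Algebra.TensorProduct.includeRight : T →ₐ[K] R ⊗[K] T) a
            = Ideal.comap (Algebra.TensorProduct.includeLeft : T →ₐ[K] T ⊗[K] R) b) :
    Ideal.map
        (Algebra.TensorProduct.includeLeft :
          (R ⊗[K] T) →ₐ[K] (R ⊗[K] T) ⊗[K] R) a ⊔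
      Ideal.map
        (Algebra.TensorProduct.map
          (Algebra.TensorProduct.includeRight : T →ₐ[K] R ⊗[K] T)
          (AlgHom.id K R) :
          (T ⊗[K] R) →ₐ[K] (R ⊗[K] T) ⊗[K] R) b ≠ ⊤ :=
  prolongation_lemma_general a ha b hmatch
end

section
/- Let k be a field with a surjective ring endomorphism σ_k, let R be a commutative k-algebra equipped with an injective ring endomorphism σ_R satisfying σ_R(c • r) = σ_k(c) • σ_R(r) for all c ∈ k, r ∈ R, and let K be a field extension of k equipped with a ring endomorphism σ_K extending σ_k. Let Σ : R ⊗_k K → R ⊗_k K be the (unique) ring endomorphism satisfying Σ(r ⊗ x) = σ_R(r) ⊗ σ_K(x). Then: (1) Σ is injective; and (2) if a is an ideal of R with σ_R^{-1}(a) = a, then the ideal a' of R ⊗_k K generated by the image of a under r ↦ r ⊗ 1 satisfies Σ^{-1}(a') = a'. -/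
/-!
Fix a `k`-basis `(bᵢ)` of `K`, so every element of `R ⊗[k] K` is uniquely `∑ rᵢ ⊗ bᵢ`. Since `σ_k`
is surjective, the `σ_k`-semilinear embedding `σ_K` keeps `(σ_K bᵢ)` linearly independent, and
`Σ (∑ rᵢ ⊗ bᵢ) = ∑ σ_R rᵢ ⊗ σ_K bᵢ`. Over a field, an element `∑ cᵢ ⊗ vᵢ` with `(vᵢ)` linearly
independent lies in the extension of an ideal `a` exactly when every `cᵢ ∈ a`: that extension is
the kernel of `R ⊗[k] K → (R ⧸ a) ⊗[k] K`, where the `1 ⊗ vᵢ` stay independent over `R ⧸ a`.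
Hence `Σ t ∈ a'` iff all `σ_R rᵢ ∈ a` iff all `rᵢ ∈ a` iff `t ∈ a'`; injectivity of `Σ` is the
case `a = 0`.
-/

open scoped TensorProduct

namespace LinearIndependent

variable {k ι : Type*} [Field k]

theorem sum_tmul_eq_zero_iff {S V : Type*} [Ring S] [Algebra k S] [AddCommGroup V]
    [Module k V] {v : ι → V} (hv : LinearIndependent k v) (s : Finset ι) (c : ι → S) :
    ∑ i ∈ s, c i ⊗ₜ[k] v i = 0 ↔ ∀ i ∈ s, c i = 0 := by
  have hv' : LinearIndependent S ((1 : S) ⊗ₜ[k] v ·) := Module.Flat.linearIndependent_one_tmul hv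
  have hsmul : ∀ i, c i ⊗ₜ[k] v i = c i • ((1 : S) ⊗ₜ[k] v i) := fun i => by
    rw [TensorProduct.smul_tmul', smul_eq_mul, mul_one]
  simp_rw [hsmul]
  refine ⟨linearIndependent_iff'.mp hv' s c, fun h => ?_⟩
  exact Finset.sum_eq_zero fun i hi => by rw [h i hi, zero_smul]

theorem sum_tmul_mem_map_includeLeft_iff {S K : Type*} [CommRing S] [Algebra k S] [CommRing K]
    [Algebra k K] {v : ι → K} (hv : LinearIndependent k v) (a : Ideal S) (s : Finset ι)
    (c : ι → S) :
    ∑ i ∈ s, c i ⊗ₜ[k] v i ∈ a.map (Algebra.TensorProduct.includeLeft : S →ₐ[k] S ⊗[k] K) ↔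
      ∀ i ∈ s, c i ∈ a := by
  have hker : a.map (Algebra.TensorProduct.includeLeft : S →ₐ[k] S ⊗[k] K) =
      RingHom.ker (Algebra.TensorProduct.map (Ideal.Quotient.mkₐ k a) (AlgHom.id k K)) := by
    rw [Algebra.TensorProduct.rTensor_ker _ (Ideal.Quotient.mkₐ_surjective k a)]
    exact congrArg _ (Ideal.Quotient.mkₐ_ker k a).symm
  rw [hker, RingHom.mem_ker, map_sum]
  simp only [Algebra.TensorProduct.map_tmul, Ideal.Quotient.mkₐ_eq_mk, AlgHom.coe_id, id_eq]
  rw [hv.sum_tmul_eq_zero_iff]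
  simp only [Ideal.Quotient.eq_zero_iff_mem]

end LinearIndependent

theorem tensor_endomorphism_injective_and_reflexive_ideals_general
    {k R K : Type*} [Field k] [CommRing R] [Algebra k R] [Field K] [Algebra k K]
    (σk : k →+* k) (hsurj : Function.Surjective σk)
    (σR : R →+* R) (hinjR : Function.Injective σR)
    (σK : K →+* K) (hcompatK : ∀ c : k, σK (algebraMap k K c) = algebraMap k K (σk c))
    (σT : (R ⊗[k] K) →+* (R ⊗[k] K))
    (hsigT : ∀ (r : R) (x : K), σT (r ⊗ₜ[k] x) = σR r ⊗ₜ[k] σK x) :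
    Function.Injective σT ∧
    ∀ a : Ideal R, Ideal.comap σR a = a →
      Ideal.comap σT
          (Ideal.map (Algebra.TensorProduct.includeLeft : R →ₐ[k] R ⊗[k] K) a)
        = Ideal.map (Algebra.TensorProduct.includeLeft : R →ₐ[k] R ⊗[k] K) a := by
  let b := Module.Basis.ofVectorSpace k K
  have hσb : LinearIndependent k (σK ∘ b) :=
    b.linearIndependent.map_of_surjective_injective σk σK.toAddMonoidHom hsurj
      (fun _ hx => (map_eq_zero σK).mp hx) (fun c x => by simp [Algebra.smul_def, hcompatK])
  have reflexive : ∀ a : Ideal R, Ideal.comap σR a = a →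
      Ideal.comap σT (a.map (Algebra.TensorProduct.includeLeft : R →ₐ[k] R ⊗[k] K))
        = a.map (Algebra.TensorProduct.includeLeft : R →ₐ[k] R ⊗[k] K) := by
    intro a ha
    ext t
    obtain ⟨c, rfl⟩ := TensorProduct.eq_repr_basis_right b t
    rw [Ideal.mem_comap, Finsupp.sum, map_sum]
    simp only [hsigT]
    refine (hσb.sum_tmul_mem_map_includeLeft_iff a c.support (σR ∘ c)).trans ?_
    rw [b.linearIndependent.sum_tmul_mem_map_includeLeft_iff]
    simp only [Function.comp_apply, ← Ideal.mem_comap, ha]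
  refine ⟨?_, reflexive⟩
  have hker := reflexive ⊥ ((RingHom.injective_iff_ker_eq_bot σR).mp hinjR)
  rw [Ideal.map_bot] at hker
  exact (RingHom.injective_iff_ker_eq_bot σT).mpr hker

/-- Let `k` be an inversive `σ`-field, `R` a `k`-`σ`-algebra with `σ_R` injective, and
`K` a `σ`-field extension of `k`.  Then the induced endomorphism `Σ = σ_R ⊗ σ_K` of
`R ⊗[k] K` is injective, and for every reflexive `σ`-ideal `a` of `R` (i.e.
`σ_R⁻¹(a) = a`) the ideal generated by `a` in `R ⊗[k] K` is a reflexive `Σ`-ideal. -/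
theorem tensor_endomorphism_injective_and_reflexive_ideals
    {k R K : Type*} [Field k] [CommRing R] [Algebra k R] [Field K] [Algebra k K]
    (σk : k →+* k) (hsurj : Function.Surjective σk)
    (σR : R →+* R) (hinjR : Function.Injective σR)
    (hcompatR : ∀ (c : k) (r : R), σR (c • r) = σk c • σR r)
    (σK : K →+* K) (hcompatK : ∀ c : k, σK (algebraMap k K c) = algebraMap k K (σk c))
    (σT : (R ⊗[k] K) →+* (R ⊗[k] K))
    (hsigT : ∀ (r : R) (x : K), σT (r ⊗ₜ[k] x) = σR r ⊗ₜ[k] σK x) :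
    Function.Injective σT ∧
    ∀ a : Ideal R, Ideal.comap σR a = a →
      Ideal.comap σT
          (Ideal.map (Algebra.TensorProduct.includeLeft : R →ₐ[k] R ⊗[k] K) a)
        = Ideal.map (Algebra.TensorProduct.includeLeft : R →ₐ[k] R ⊗[k] K) a :=
  tensor_endomorphism_injective_and_reflexive_ideals_general σk hsurj σR hinjR σK hcompatK σT hsigT
end
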